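/- arXiv:2505.14169 — 2 statements merged into one kernel-verified Lean document; each statement's English description precedes it below -/
import Mathlib

section
/- Let P be a symmetric positive definite n×n real matrix, J an n×m real matrix of full column rank, and Q any symmetric positive definite n×n real matrix. Then the matrix (Jᵀ Q⁻¹ J)⁻¹ Jᵀ Q⁻¹ P Q⁻¹ J (Jᵀ Q⁻¹ J)⁻¹ − (Jᵀ P⁻¹ J)⁻¹ is positive semidefinite, with equality (the difference is zero) when Q = P. -/
open Matrix

private lemma mulVec_inj_of_rank {n m : ℕ} {J : Matrix (Fin n) (Fin m) ℝ}
    (hJ : J.rank = m) : Function.Injective J.mulVec := by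
  have h1 : Module.finrank ℝ (LinearMap.range J.mulVecLin) +
      Module.finrank ℝ (LinearMap.ker J.mulVecLin) = Module.finrank ℝ (Fin m → ℝ) :=
    J.mulVecLin.finrank_range_add_finrank_ker
  have hm : Module.finrank ℝ (Fin m → ℝ) = m := by simp
  have hr : Module.finrank ℝ (LinearMap.range J.mulVecLin) = m := hJ
  have hk : Module.finrank ℝ (LinearMap.ker J.mulVecLin) = 0 := by omega
  have hbot : LinearMap.ker J.mulVecLin = ⊥ := Submodule.finrank_eq_zero.mp hk
  have := LinearMap.ker_eq_bot.mp hbot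
  simpa [Matrix.coe_mulVecLin] using this

private lemma posdef_conj {n m : ℕ} {M : Matrix (Fin n) (Fin n) ℝ}
    (hM : M.PosDef) {J : Matrix (Fin n) (Fin m) ℝ}
    (hJ : Function.Injective J.mulVec) : (Jᵀ * M * J).PosDef := by
  refine posDef_iff_dotProduct_mulVec.mpr ⟨?_, fun x hx => ?_⟩
  · have h := hM.isHermitian
    rw [Matrix.IsHermitian, conjTranspose_eq_transpose_of_trivial] at h ⊢
    rw [transpose_mul, transpose_mul, transpose_transpose, h, Matrix.mul_assoc]
  · have hJx : J *ᵥ x ≠ 0 := fun h => hx (hJ (h.trans (Matrix.mulVec_zero J).symm))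
    have := hM.dotProduct_mulVec_pos hJx
    simpa [Matrix.mul_assoc, ← Matrix.mulVec_mulVec, Matrix.dotProduct_mulVec,
      Matrix.vecMul_transpose] using this

private lemma posdef_symm {k : ℕ} {M : Matrix (Fin k) (Fin k) ℝ} (hM : M.PosDef) :
    Mᵀ = M := by
  have h := hM.isHermitian
  rwa [Matrix.IsHermitian, conjTranspose_eq_transpose_of_trivial] at h

/-- Optimal weighting: among positive definite weights `Q`, the sandwich covariance
`(JᵀQ⁻¹J)⁻¹JᵀQ⁻¹PQ⁻¹J(JᵀQ⁻¹J)⁻¹` dominates `(JᵀP⁻¹J)⁻¹`, with equality at `Q = P`. -/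
theorem optimal_weighting {n m : ℕ} (P Q : Matrix (Fin n) (Fin n) ℝ)
    (J : Matrix (Fin n) (Fin m) ℝ)
    (hP : P.PosDef) (hQ : Q.PosDef) (hJ : J.rank = m) :
    ((Jᵀ * Q⁻¹ * J)⁻¹ * Jᵀ * Q⁻¹ * P * Q⁻¹ * J * (Jᵀ * Q⁻¹ * J)⁻¹ -
      (Jᵀ * P⁻¹ * J)⁻¹).PosSemidef ∧
    (Q = P →
      (Jᵀ * Q⁻¹ * J)⁻¹ * Jᵀ * Q⁻¹ * P * Q⁻¹ * J * (Jᵀ * Q⁻¹ * J)⁻¹ -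
        (Jᵀ * P⁻¹ * J)⁻¹ = 0) := by
  have hJi := mulVec_inj_of_rank hJ
  have hA : (Jᵀ * Q⁻¹ * J).PosDef := posdef_conj hQ.inv hJi
  have hB : (Jᵀ * P⁻¹ * J).PosDef := posdef_conj hP.inv hJi
  have detP : IsUnit P.det := hP.det_pos.ne'.isUnit
  have detA : IsUnit (Jᵀ * Q⁻¹ * J).det := hA.det_pos.ne'.isUnit
  have detB : IsUnit (Jᵀ * P⁻¹ * J).det := hB.det_pos.ne'.isUnit
  set A := Jᵀ * Q⁻¹ * J with hAdef
  set B := Jᵀ * P⁻¹ * J with hBdef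
  set S := A⁻¹ * Jᵀ * Q⁻¹ with hSdef
  set T := B⁻¹ * Jᵀ * P⁻¹ with hTdef
  have hQs : Q⁻¹ᵀ = Q⁻¹ := posdef_symm hQ.inv
  have hPs : P⁻¹ᵀ = P⁻¹ := posdef_symm hP.inv
  have hAs : A⁻¹ᵀ = A⁻¹ := posdef_symm hA.inv
  have hBs : B⁻¹ᵀ = B⁻¹ := posdef_symm hB.inv
  have hSt : Sᵀ = Q⁻¹ * (J * A⁻¹) := by
    rw [hSdef, transpose_mul, transpose_mul, transpose_transpose, hQs, hAs]
  have hTt : Tᵀ = P⁻¹ * (J * B⁻¹) := by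
    rw [hTdef, transpose_mul, transpose_mul, transpose_transpose, hPs, hBs]
  have hfoldA : ∀ X : Matrix (Fin m) (Fin m) ℝ,
      Jᵀ * (Q⁻¹ * (J * X)) = A * X := by
    intro X; rw [hAdef, Matrix.mul_assoc, Matrix.mul_assoc]
  have hfoldB : ∀ X : Matrix (Fin m) (Fin m) ℝ,
      Jᵀ * (P⁻¹ * (J * X)) = B * X := by
    intro X; rw [hBdef, Matrix.mul_assoc, Matrix.mul_assoc]
  have h1 : S * P * Sᵀ =
      A⁻¹ * Jᵀ * Q⁻¹ * P * Q⁻¹ * J * A⁻¹ := by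
    rw [hSt, hSdef]; simp only [Matrix.mul_assoc]
  have h2 : S * P * Tᵀ = B⁻¹ := by
    rw [hTt, hSdef]
    simp only [Matrix.mul_assoc]
    rw [Matrix.mul_nonsing_inv_cancel_left _ _ detP, hfoldA,
      Matrix.nonsing_inv_mul_cancel_left _ _ detA]
  have h3 : T * P * Sᵀ = B⁻¹ := by
    rw [hSt, hTdef]
    simp only [Matrix.mul_assoc]
    rw [Matrix.nonsing_inv_mul_cancel_left _ _ detP, hfoldA,
      Matrix.mul_nonsing_inv _ detA, mul_one]
  have h4 : T * P * Tᵀ = B⁻¹ := by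
    rw [hTt, hTdef]
    simp only [Matrix.mul_assoc]
    rw [Matrix.nonsing_inv_mul_cancel_left _ _ detP, hfoldB,
      Matrix.nonsing_inv_mul_cancel_left _ _ detB]
  have key : A⁻¹ * Jᵀ * Q⁻¹ * P * Q⁻¹ * J * A⁻¹ - B⁻¹ =
      (S - T) * P * (S - T)ᵀ := by
    rw [transpose_sub, Matrix.sub_mul, Matrix.sub_mul, Matrix.mul_sub, Matrix.mul_sub,
      h1, h2, h3, h4]
    abel
  constructor
  · rw [key]
    have := hP.posSemidef.mul_mul_conjTranspose_same (S - T)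
    rwa [conjTranspose_eq_transpose_of_trivial] at this
  · intro hQP
    rw [key]
    have hST : S = T := by
      rw [hSdef, hTdef, hAdef, hBdef, hQP]
    rw [hST, sub_self, Matrix.zero_mul, Matrix.zero_mul]
end

section
/- Let f : ℝᵐ → ℝⁿ be an injective smooth map whose Jacobian has full column rank m at ρ*. If β̂_N → f(ρ*) in probability and ρ̂_N ∈ argmin_ρ ‖β̂_N − f(ρ)‖²_{Q_N⁻¹} with Q_N → Q positive definite, and ρ̂_N remains in a compact neighborhood of ρ* on which f is injective, then ρ̂_N → ρ* in probability. -/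
open Matrix MeasureTheory Filter

attribute [local instance] Matrix.normedAddCommGroup

/-- Convergence in probability to a constant. -/
def TendstoInProbability {Ω E : Type*} [MeasurableSpace Ω] [NormedAddCommGroup E]
    (X : ℕ → Ω → E) (μ : Measure Ω) (c : E) : Prop :=
  ∀ ε : ℝ, 0 < ε →
    Tendsto (fun N => μ {ω | ε ≤ ‖X N ω - c‖}) atTop (nhds 0)

lemma quad_abs {n : ℕ} (M : Matrix (Fin n) (Fin n) ℝ) (x : Fin n → ℝ) :
    |x ⬝ᵥ M.mulVec x| ≤ (n:ℝ)^2 * ‖M‖ * ‖x‖^2 := by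
  have h1 : ∀ i j : Fin n, |x i * (M i j * x j)| ≤ ‖x‖ * (‖M‖ * ‖x‖) := by
    intro i j
    rw [abs_mul, abs_mul]
    have hi : |x i| ≤ ‖x‖ := norm_le_pi_norm x i
    have hj : |x j| ≤ ‖x‖ := norm_le_pi_norm x j
    have hM : |M i j| ≤ ‖M‖ := M.norm_entry_le_entrywise_sup_norm
    exact mul_le_mul hi (mul_le_mul hM hj (abs_nonneg _) (norm_nonneg _))
      (mul_nonneg (abs_nonneg _) (abs_nonneg _)) (norm_nonneg _)
  calc |x ⬝ᵥ M.mulVec x| = |∑ i, ∑ j, x i * (M i j * x j)| := by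
        simp [dotProduct, Matrix.mulVec, Finset.mul_sum]
    _ ≤ ∑ i, |∑ j, x i * (M i j * x j)| := Finset.abs_sum_le_sum_abs _ _
    _ ≤ ∑ i, ∑ j, |x i * (M i j * x j)| :=
        Finset.sum_le_sum fun i _ => Finset.abs_sum_le_sum_abs _ _
    _ ≤ ∑ _i : Fin n, ∑ _j : Fin n, ‖x‖ * (‖M‖ * ‖x‖) :=
        Finset.sum_le_sum fun i _ => Finset.sum_le_sum fun j _ => h1 i j
    _ = (n:ℝ)^2 * ‖M‖ * ‖x‖^2 := by
        simp [Finset.sum_const, Finset.card_univ]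
        ring

lemma quad_cont {n : ℕ} (M : Matrix (Fin n) (Fin n) ℝ) :
    Continuous fun x : Fin n → ℝ => x ⬝ᵥ M.mulVec x := by
  simp only [Matrix.mulVec, dotProduct]
  fun_prop

lemma posdef_lower {n : ℕ} {M : Matrix (Fin n) (Fin n) ℝ} (hM : M.PosDef) :
    ∃ a > 0, ∀ x : Fin n → ℝ, a * ‖x‖^2 ≤ x ⬝ᵥ M.mulVec x := by
  have hpos : ∀ x : Fin n → ℝ, x ≠ 0 → 0 < x ⬝ᵥ M.mulVec x := by
    intro x hx
    have := hM.dotProduct_mulVec_pos hx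
    simpa using this
  by_cases hsph : (Metric.sphere (0 : Fin n → ℝ) 1).Nonempty
  · obtain ⟨u, ha_mem, ha_min⟩ := (isCompact_sphere (0 : Fin n → ℝ) 1).exists_isMinOn hsph
      ((quad_cont M).continuousOn)
    refine ⟨u ⬝ᵥ M.mulVec u, hpos u (by
      intro h0; rw [h0] at ha_mem; simp at ha_mem), ?_⟩
    intro x
    rcases eq_or_ne x 0 with rfl | hx
    · simp
    · have hxn : (0:ℝ) < ‖x‖ := norm_pos_iff.2 hx
      have hmem : ‖x‖⁻¹ • x ∈ Metric.sphere (0 : Fin n → ℝ) 1 := by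
        simp [norm_smul, abs_of_pos (inv_pos.2 hxn), inv_mul_cancel₀ hxn.ne']
      have hmin : u ⬝ᵥ M.mulVec u ≤ (‖x‖⁻¹ • x) ⬝ᵥ M.mulVec (‖x‖⁻¹ • x) := ha_min hmem
      have hscale : (‖x‖⁻¹ • x) ⬝ᵥ M.mulVec (‖x‖⁻¹ • x) = ‖x‖⁻¹^2 * (x ⬝ᵥ M.mulVec x) := by
        rw [Matrix.mulVec_smul, dotProduct_smul, smul_dotProduct]
        simp [smul_eq_mul]; ring
      rw [hscale] at hmin
      have := mul_le_mul_of_nonneg_left hmin (sq_nonneg ‖x‖)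
      rw [← mul_assoc] at this
      have hc : ‖x‖^2 * ‖x‖⁻¹^2 = 1 := by
        rw [← mul_pow, mul_inv_cancel₀ hxn.ne', one_pow]
      rw [hc, one_mul] at this
      calc u ⬝ᵥ M.mulVec u * ‖x‖^2 = ‖x‖^2 * (u ⬝ᵥ M.mulVec u) := by ring
        _ ≤ x ⬝ᵥ M.mulVec x := this
  · refine ⟨1, one_pos, fun x => ?_⟩
    have hx : x = 0 := by
      by_contra hx
      have hxn : (0:ℝ) < ‖x‖ := norm_pos_iff.2 hx
      exact hsph ⟨‖x‖⁻¹ • x, by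
        simp [norm_smul, abs_of_pos (inv_pos.2 hxn), inv_mul_cancel₀ hxn.ne']⟩
    simp [hx]

/-- Consistency of the structured projection estimator: if `β̂_N → f(ρ*)` in
probability and `ρ̂_N` minimizes the weighted distance `‖β̂_N − f(ρ)‖²_{Q_N⁻¹}` while
staying in a compact set on which the smooth injective map `f` is injective, then
`ρ̂_N → ρ*` in probability. -/
theorem structured_projection_consistency {m n : ℕ}
    {Ω : Type*} [MeasurableSpace Ω] (μ : Measure Ω) [IsProbabilityMeasure μ]
    (f : (Fin m → ℝ) → (Fin n → ℝ)) (hf : ContDiff ℝ (⊤ : ℕ∞) f)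
    (hfinj : Function.Injective f)
    (ρstar : Fin m → ℝ)
    (hrank : Function.Injective (fderiv ℝ f ρstar))
    (K : Set (Fin m → ℝ)) (hK : IsCompact K) (hρK : ρstar ∈ K)
    (hfinjK : Set.InjOn f K)
    (Qs : ℕ → Matrix (Fin n) (Fin n) ℝ) (Q : Matrix (Fin n) (Fin n) ℝ)
    (hQs : ∀ N, (Qs N).PosDef) (hQ : Q.PosDef)
    (hQconv : Tendsto Qs atTop (nhds Q))
    (βhat : ℕ → Ω → Fin n → ℝ) (ρhat : ℕ → Ω → Fin m → ℝ)
    (hmem : ∀ N ω, ρhat N ω ∈ K)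
    (hargmin : ∀ N ω ρ,
      (βhat N ω - f (ρhat N ω)) ⬝ᵥ ((Qs N)⁻¹).mulVec (βhat N ω - f (ρhat N ω)) ≤
        (βhat N ω - f ρ) ⬝ᵥ ((Qs N)⁻¹).mulVec (βhat N ω - f ρ))
    (hβ : TendstoInProbability βhat μ (f ρstar)) :
    TendstoInProbability ρhat μ ρstar := by
  -- Step 1: inverses converge
  have hdet : Q.det ≠ 0 := hQ.det_pos.ne'
  have hcontinv : ContinuousAt Inv.inv Q := by
    apply continuousAt_matrix_inv
    rw [Ring.inverse_eq_inv']
    exact continuousAt_inv₀ hdet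
  have hQinvconv : Tendsto (fun N => (Qs N)⁻¹) atTop (nhds Q⁻¹) :=
    (hcontinv.tendsto).comp hQconv
  -- Step 2: uniform bounds on the quadratic forms
  obtain ⟨a, ha_pos, ha⟩ := posdef_lower (hQ.inv)
  set r : ℝ := a / (2 * ((n:ℝ)^2 + 1)) with hr_def
  have hn2 : (0:ℝ) < (n:ℝ)^2 + 1 := by positivity
  have hr_pos : 0 < r := by positivity
  have hNr : ∀ᶠ N in atTop, ‖(Qs N)⁻¹ - Q⁻¹‖ < r := by
    have := Metric.tendsto_nhds.1 hQinvconv r hr_pos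
    filter_upwards [this] with N hN
    simpa [dist_eq_norm] using hN
  obtain ⟨N₀, hN₀⟩ := eventually_atTop.1 hNr
  set b : ℝ := (n:ℝ)^2 * ‖Q⁻¹‖ + a / 2 with hb_def
  have hb_pos : 0 < b := by positivity
  have hbounds : ∀ N ≥ N₀, ∀ x : Fin n → ℝ,
      (a/2) * ‖x‖^2 ≤ x ⬝ᵥ ((Qs N)⁻¹).mulVec x ∧
      x ⬝ᵥ ((Qs N)⁻¹).mulVec x ≤ b * ‖x‖^2 := by
    intro N hN x
    have hΔ : ‖(Qs N)⁻¹ - Q⁻¹‖ < r := hN₀ N hN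
    have hsplit : x ⬝ᵥ ((Qs N)⁻¹).mulVec x =
        x ⬝ᵥ (Q⁻¹).mulVec x + x ⬝ᵥ ((Qs N)⁻¹ - Q⁻¹).mulVec x := by
      rw [← dotProduct_add, ← Matrix.add_mulVec, add_sub_cancel]
    have habs : |x ⬝ᵥ ((Qs N)⁻¹ - Q⁻¹).mulVec x| ≤ (n:ℝ)^2 * r * ‖x‖^2 := by
      refine (quad_abs _ x).trans ?_
      have : (n:ℝ)^2 * ‖(Qs N)⁻¹ - Q⁻¹‖ ≤ (n:ℝ)^2 * r := by
        apply mul_le_mul_of_nonneg_left hΔ.le (by positivity)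
      exact mul_le_mul_of_nonneg_right this (sq_nonneg _)
    have hrq : (n:ℝ)^2 * r ≤ a / 2 := by
      have h1 : (n:ℝ)^2 * r = (a/2) * ((n:ℝ)^2/((n:ℝ)^2+1)) := by
        rw [hr_def]; field_simp
      have h2 : (n:ℝ)^2/((n:ℝ)^2+1) ≤ 1 := by
        rw [div_le_one hn2]; linarith
      rw [h1]
      nlinarith
    have habs' : |x ⬝ᵥ ((Qs N)⁻¹ - Q⁻¹).mulVec x| ≤ (a/2) * ‖x‖^2 :=
      habs.trans (mul_le_mul_of_nonneg_right hrq (sq_nonneg _))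
    have hQup : x ⬝ᵥ (Q⁻¹).mulVec x ≤ (n:ℝ)^2 * ‖Q⁻¹‖ * ‖x‖^2 :=
      (le_abs_self _).trans (quad_abs _ x)
    constructor
    · have hlow := ha x
      have h1 : -((a/2) * ‖x‖^2) ≤ x ⬝ᵥ ((Qs N)⁻¹ - Q⁻¹).mulVec x := neg_le_of_abs_le habs'
      rw [hsplit]
      nlinarith
    · have h2 : x ⬝ᵥ ((Qs N)⁻¹ - Q⁻¹).mulVec x ≤ (a/2) * ‖x‖^2 := le_of_abs_le habs'
      rw [hsplit, hb_def]
      nlinarith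
  -- Step 3: deterministic comparison
  set C : ℝ := Real.sqrt (b / (a/2)) with hC_def
  have hC_nonneg : 0 ≤ C := Real.sqrt_nonneg _
  have hkey : ∀ N ≥ N₀, ∀ ω,
      ‖f (ρhat N ω) - f ρstar‖ ≤ (C + 1) * ‖βhat N ω - f ρstar‖ := by
    intro N hN ω
    set β := βhat N ω
    set e := β - f (ρhat N ω) with he
    set e0 := β - f ρstar with he0
    have h1 := (hbounds N hN e).1
    have h2 := (hbounds N hN e0).2
    have h3 := hargmin N ω ρstar
    have hchain : (a/2) * ‖e‖^2 ≤ b * ‖e0‖^2 := le_trans h1 (le_trans h3 h2)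
    have hesq : ‖e‖^2 ≤ (b / (a/2)) * ‖e0‖^2 := by
      rw [div_mul_eq_mul_div, le_div_iff₀ (by positivity)]
      nlinarith
    have hele : ‖e‖ ≤ C * ‖e0‖ := by
      have := Real.sqrt_le_sqrt hesq
      rw [Real.sqrt_sq (norm_nonneg _)] at this
      rw [Real.sqrt_mul (by positivity), Real.sqrt_sq (norm_nonneg _)] at this
      exact this
    calc ‖f (ρhat N ω) - f ρstar‖ = ‖(f (ρhat N ω) - β) + (β - f ρstar)‖ := by ring_nf
      _ ≤ ‖f (ρhat N ω) - β‖ + ‖β - f ρstar‖ := norm_add_le _ _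
      _ = ‖e‖ + ‖e0‖ := by rw [norm_sub_rev, ← he, ← he0]
      _ ≤ C * ‖e0‖ + 1 * ‖e0‖ := by rw [one_mul]; exact add_le_add_left hele _
      _ = (C + 1) * ‖e0‖ := by ring
  -- Step 4: separation on the compact set
  intro ε hε
  have hsep : ∃ c > 0, ∀ ρ ∈ K, ‖f ρ - f ρstar‖ < c → ‖ρ - ρstar‖ < ε := by
    set S : Set (Fin m → ℝ) := K ∩ {ρ | ε ≤ ‖ρ - ρstar‖} with hS_def
    have hS_comp : IsCompact S := hK.inter_right
      (isClosed_le continuous_const ((continuous_id.sub continuous_const).norm))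
    by_cases hS_ne : S.Nonempty
    · have hgc : Continuous fun ρ : Fin m → ℝ => ‖f ρ - f ρstar‖ :=
        (hf.continuous.sub continuous_const).norm
      obtain ⟨ρ₀, hρ₀S, hρ₀min⟩ := hS_comp.exists_isMinOn hS_ne hgc.continuousOn
      refine ⟨‖f ρ₀ - f ρstar‖, ?_, ?_⟩
      · show (0:ℝ) < _
        rw [norm_pos_iff, sub_ne_zero]
        intro heq
        have : ρ₀ = ρstar := hfinjK hρ₀S.1 hρK heq
        rw [this] at hρ₀S
        have := hρ₀S.2
        simp at this
        linarith
      · intro ρ hρK' hlt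
        by_contra hge
        push_neg at hge
        have hρS : ρ ∈ S := ⟨hρK', hge⟩
        have : ‖f ρ₀ - f ρstar‖ ≤ ‖f ρ - f ρstar‖ := hρ₀min hρS
        linarith
    · refine ⟨1, one_pos, fun ρ hρ _ => ?_⟩
      by_contra hge
      push_neg at hge
      exact hS_ne ⟨ρ, hρ, hge⟩
  obtain ⟨c, hc_pos, hc⟩ := hsep
  -- Step 5: transfer the probability bound
  set δ : ℝ := c / (C + 1) with hδ_def
  have hδ_pos : 0 < δ := by positivity
  have hsubset : ∀ N ≥ N₀,
      {ω | ε ≤ ‖ρhat N ω - ρstar‖} ⊆ {ω | δ ≤ ‖βhat N ω - f ρstar‖} := by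
    intro N hN ω hω
    simp only [Set.mem_setOf_eq] at hω ⊢
    by_contra hlt
    push_neg at hlt
    have h1 : ‖f (ρhat N ω) - f ρstar‖ ≤ (C + 1) * ‖βhat N ω - f ρstar‖ := hkey N hN ω
    have h2 : (C + 1) * ‖βhat N ω - f ρstar‖ < (C + 1) * δ :=
      mul_lt_mul_of_pos_left hlt (by positivity)
    have h3 : (C + 1) * δ = c := by
      rw [hδ_def]; field_simp
    have h4 : ‖f (ρhat N ω) - f ρstar‖ < c := by linarith
    have := hc (ρhat N ω) (hmem N ω) h4
    linarith
  have h0 := hβ δ hδ_pos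
  apply tendsto_of_tendsto_of_tendsto_of_le_of_le' tendsto_const_nhds h0
  · exact Eventually.of_forall fun N => zero_le
  · filter_upwards [eventually_ge_atTop N₀] with N hN
    exact measure_mono (hsubset N hN)
end
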